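/- Fix n ≥ 1 relays with path gains a_k > 0 (source A to relay k) and b_k > 0 (relay k to source B), and let G_1, …, G_n, H_1, …, H_n be mutually independent unit-rate exponential fading powers. Let K* be the (almost surely unique) index maximizing (1/(a_k G_k) + 1/(b_k H_k))^{-1} over k = 1, …, n. Let τ_f, τ_b ∈ (0,1) with τ_f + τ_b = 1, let μ > 0, and let 0 < m < (1/2)·min{(1+μ)τ_f, (1+1/μ)τ_b}. For γ > 1 define I_1(γ) = log(1 + γ a_{K*} G_{K*}), I_2(γ) = log(1 + γ b_{K*} H_{K*}), and ε(γ) = P[ {(τ_f/2)·min(I_1, I_2) < (m/(1+μ)) log γ} ∪ {(τ_b/2)·min(I_1, I_2) < (m/(1+1/μ)) log γ} ]. Then limsup_{γ→∞} log ε(γ)/log γ ≤ −n·(1 − 2m / min{(1+μ)τ_f, (1+1/μ)τ_b}); that is, TDMH routed through the single optimally selected relay achieves the same diversity-multiplexing tradeoff as TDMH with full relay collaboration. -/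

import Mathlib

open MeasureTheory ProbabilityTheory Filter

/-- A real random variable `g` is unit-rate exponential (w.r.t. measure `ℙ`) if
`ℙ[g > x] = e^{-x}` for all `x ≥ 0`. -/
def IsUnitExp {Ω : Type*} [MeasureSpace Ω] (g : Ω → ℝ) : Prop :=
  ∀ x : ℝ, 0 ≤ x → ℙ {ω | x < g ω} = ENNReal.ofReal (Real.exp (-x))

/-!
Together, the two outage conditions say `min I₁ I₂ < r log γ` with
`r = 2m / min {(1+μ)τ_f, (1+1/μ)τ_b} < 1`, i.e. that the weaker hop through the selected relay
has received power below `s γ = (γ ^ r - 1) / γ ≤ γ ^ (r - 1)`. The harmonic metric lies between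
`min / 2` and `min`, so maximality of `K*` forces a hop below `2 s γ` at every relay; by
independence and `ℙ[g ≤ x] ≤ x` this has probability `O((s γ) ^ n)`. The crude lower bound
`ε γ ≥ c γ ^ (-n)` (all `G_k` small) keeps `log ε γ / log γ` bounded below, so that the limsup
is controlled by the upper bound.
-/

open Real Topology

namespace IsUnitExp

variable {Ω : Type*} [MeasureSpace Ω] [IsProbabilityMeasure (ℙ : Measure Ω)] {g : Ω → ℝ}
  {x : ℝ}

lemma measure_preimage_Iic (hg : Measurable g) (he : IsUnitExp g) (hx : 0 ≤ x) :
    ℙ (g ⁻¹' Set.Iic x) = ENNReal.ofReal (1 - exp (-x)) := by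
  have hcompl : g ⁻¹' Set.Iic x = {ω | x < g ω}ᶜ := by ext; simp
  rw [hcompl, prob_compl_eq_one_sub (measurableSet_lt measurable_const hg), he x hx,
    ENNReal.ofReal_sub _ (exp_nonneg _), ENNReal.ofReal_one]

lemma ae_pos (hg : Measurable g) (he : IsUnitExp g) : ∀ᵐ ω, 0 < g ω := by
  rw [ae_iff]
  simp only [not_lt]
  exact (he.measure_preimage_Iic hg le_rfl).trans (by simp)

lemma measure_preimage_Iic_le (hg : Measurable g) (he : IsUnitExp g) (hx : 0 ≤ x) :
    ℙ (g ⁻¹' Set.Iic x) ≤ ENNReal.ofReal x := by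
  rw [he.measure_preimage_Iic hg hx]
  exact ENNReal.ofReal_le_ofReal (by linarith [add_one_le_exp (-x)])

lemma ofReal_div_one_add_le_measure_preimage_Iic (hg : Measurable g) (he : IsUnitExp g)
    (hx : 0 ≤ x) : ENNReal.ofReal (x / (1 + x)) ≤ ℙ (g ⁻¹' Set.Iic x) := by
  rw [he.measure_preimage_Iic hg hx]
  refine ENNReal.ofReal_le_ofReal ?_
  have hexp : exp (-x) ≤ 1 / (1 + x) := by
    rw [exp_neg, ← one_div]
    exact one_div_le_one_div_of_le (by positivity) (by linarith [add_one_le_exp x])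
  have hsplit : x / (1 + x) = 1 - 1 / (1 + x) := by field_simp; ring
  linarith

end IsUnitExp

lemma inv_one_div_add_one_div_le_min {x y : ℝ} (hx : 0 < x) (hy : 0 < y) :
    (1 / x + 1 / y)⁻¹ ≤ min x y := by
  refine le_min ?_ ?_
  · rw [inv_le_comm₀ (by positivity) hx, inv_eq_one_div]
    linarith [one_div_pos.2 hy]
  · rw [inv_le_comm₀ (by positivity) hy, inv_eq_one_div]
    linarith [one_div_pos.2 hx]

lemma min_le_two_mul_inv_one_div_add_one_div {x y : ℝ} (hx : 0 < x) (hy : 0 < y) :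
    min x y ≤ 2 * (1 / x + 1 / y)⁻¹ := by
  have hmin : 0 < min x y := lt_min hx hy
  have hsum : 1 / x + 1 / y ≤ 2 / min x y := by
    have := one_div_le_one_div_of_le hmin (min_le_left x y)
    have := one_div_le_one_div_of_le hmin (min_le_right x y)
    have : 2 / min x y = 1 / min x y + 1 / min x y := by ring
    linarith
  rw [le_mul_inv_iff₀ (by positivity)]
  rwa [le_div_iff₀ hmin, mul_comm] at hsum

lemma min_le_two_mul_min_of_harmonic_le {x y x' y' : ℝ} (hx : 0 < x) (hy : 0 < y)
    (hx' : 0 < x') (hy' : 0 < y') (h : (1 / x + 1 / y)⁻¹ ≤ (1 / x' + 1 / y')⁻¹) :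
    min x y ≤ 2 * min x' y' :=
  calc min x y ≤ 2 * (1 / x + 1 / y)⁻¹ := min_le_two_mul_inv_one_div_add_one_div hx hy
    _ ≤ 2 * min x' y' := by gcongr; exact h.trans (inv_one_div_add_one_div_le_min hx' hy')

lemma ProbabilityTheory.iIndepFun.measure_iInter_preimage_union_le {Ω ι β : Type*}
    [MeasurableSpace Ω] [MeasurableSpace β] [Fintype ι] {μ : Measure Ω} {X Y : ι → Ω → β}
    (h : iIndepFun (Sum.elim X Y) μ) {A B : ι → Set β} (hA : ∀ k, MeasurableSet (A k))
    (hB : ∀ k, MeasurableSet (B k)) :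
    μ (⋂ k, (X k ⁻¹' A k ∪ Y k ⁻¹' B k))
      ≤ ∏ k, (μ (X k ⁻¹' A k) + μ (Y k ⁻¹' B k)) := by
  classical
  let S : ι → Bool → Set Ω := fun k c => bif c then (X k ⁻¹' A k) else (Y k ⁻¹' B k)
  have hcover : ⋂ k, (X k ⁻¹' A k ∪ Y k ⁻¹' B k) ⊆ ⋃ σ : ι → Bool, ⋂ k, S k (σ k) := by
    intro ω hω
    simp only [Set.mem_iInter, Set.mem_union] at hω
    refine Set.mem_iUnion.2 ⟨fun k => decide (ω ∈ X k ⁻¹' A k), Set.mem_iInter.2 fun k => ?_⟩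
    by_cases hk : ω ∈ X k ⁻¹' A k
    · simp [S, hk]
    · simpa [S, hk] using (hω k).resolve_left hk
  -- `σ` uses one coordinate of `Sum.elim X Y` per index, so the factors are independent.
  have hfactor : ∀ σ : ι → Bool, μ (⋂ k, S k (σ k)) = ∏ k, μ (S k (σ k)) := by
    intro σ
    let pick : ι → ι ⊕ ι := fun k => bif σ k then Sum.inl k else Sum.inr k
    have hpick : pick.Injective := by
      intro k l hkl
      cases hk : σ k <;> cases hl : σ l <;> simp_all [pick]
    refine (h.precomp hpick).meas_iInter fun k => ?_
    cases hk : σ k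
    · exact ⟨B k, hB k, by simp [S, pick, hk]⟩
    · exact ⟨A k, hA k, by simp [S, pick, hk]⟩
  calc μ (⋂ k, (X k ⁻¹' A k ∪ Y k ⁻¹' B k))
      ≤ ∑ σ : ι → Bool, μ (⋂ k, S k (σ k)) :=
        (measure_mono hcover).trans (measure_iUnion_fintype_le _ _)
    _ = ∏ k, ∑ c : Bool, μ (S k c) := by simp only [hfactor, Fintype.prod_sum]
    _ = ∏ k, (μ (X k ⁻¹' A k) + μ (Y k ⁻¹' B k)) := by simp [S]

lemma lt_or_lt_iff_min_mul_lt {A B X c : ℝ} (hA : 0 < A) (hB : 0 < B) (hc : 0 ≤ c) :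
    A * X < c ∨ B * X < c ↔ min A B * X < c := by
  rcases le_or_gt 0 X with hX | hX
  · rw [min_mul_of_nonneg _ _ hX, min_lt_iff]
  · have hneg : ∀ D, 0 < D → D * X < c := fun D hD => by nlinarith
    exact iff_of_true (Or.inl (hneg A hA)) (hneg _ (lt_min hA hB))

lemma tdmh_outage_iff {τf τb μ m X L : ℝ} (hτf : 0 < τf) (hτb : 0 < τb) (hμ : 0 < μ)
    (hmL : 0 ≤ m * L) :
    τf / 2 * X < m / (1 + μ) * L ∨ τb / 2 * X < m / (1 + 1 / μ) * L
      ↔ X < 2 * m / min ((1 + μ) * τf) ((1 + 1 / μ) * τb) * L := by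
  have hscale : ∀ {τ ν : ℝ}, 0 < ν → (τ / 2 * X < m / ν * L ↔ ν * τ * X < 2 * m * L) := by
    intro τ ν hν
    have hlhs : 2 * ν * (τ / 2 * X) = ν * τ * X := by ring
    have hrhs : 2 * ν * (m / ν * L) = 2 * m * L := by field_simp
    rw [← mul_lt_mul_iff_of_pos_left (by positivity : (0 : ℝ) < 2 * ν), hlhs, hrhs]
  have hpos : 0 < min ((1 + μ) * τf) ((1 + 1 / μ) * τb) := lt_min (by positivity) (by positivity)
  rw [hscale (by positivity), hscale (by positivity),
    lt_or_lt_iff_min_mul_lt (by positivity) (by positivity) (by linarith),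
    div_mul_eq_mul_div, mul_assoc, lt_div_iff₀' hpos]

lemma min_log_one_add_mul_lt_iff {γ r x y : ℝ} (hγ : 0 < γ) (hx : 0 ≤ x) (hy : 0 ≤ y) :
    min (log (1 + γ * x)) (log (1 + γ * y)) < r * log γ ↔ min x y < (γ ^ r - 1) / γ := by
  have key : ∀ z, 0 ≤ z → (log (1 + γ * z) < r * log γ ↔ z < (γ ^ r - 1) / γ) := by
    intro z hz
    rw [← log_rpow hγ, log_lt_log_iff (by positivity) (by positivity), lt_div_iff₀ hγ]
    constructor <;> intro h <;> linarith
  rw [min_lt_iff, min_lt_iff, key x hx, key y hy]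

lemma limsup_log_div_log_le {f : ℝ → ℝ} {c C p q : ℝ} (hc : 0 < c)
    (hlow : ∀ᶠ x in atTop, c * x ^ p ≤ f x) (hup : ∀ᶠ x in atTop, f x ≤ C * x ^ q) :
    limsup (fun x => log (f x) / log x) atTop ≤ q := by
  have hlog : ∀ {k e x : ℝ}, 0 < k → 1 < x → log (k * x ^ e) / log x = log k / log x + e := by
    intro k e x hk hx
    have hlogx := log_pos hx
    rw [log_mul hk.ne' (rpow_pos_of_pos (by linarith) e).ne', log_rpow (by linarith)]
    field_simp
  have hlim : ∀ k e : ℝ, Tendsto (fun x => log k / log x + e) atTop (𝓝 e) := fun k e => by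
    simpa using (tendsto_const_nhds.div_atTop tendsto_log_atTop).add_const e
  have hbounds : ∀ᶠ x in atTop, log c / log x + p ≤ log (f x) / log x ∧
      log (f x) / log x ≤ log C / log x + q := by
    filter_upwards [hlow, hup, eventually_gt_atTop 1] with x hl hu hx
    have hcx : 0 < c * x ^ p := by positivity
    have hC : 0 < C := pos_of_mul_pos_left (hcx.trans_le (hl.trans hu)) (by positivity)
    rw [← hlog hc hx, ← hlog hC hx]
    exact ⟨div_le_div_of_nonneg_right (log_le_log hcx hl) (log_pos hx).le,
      div_le_div_of_nonneg_right (log_le_log (hcx.trans_le hl) hu) (log_pos hx).le⟩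
  -- `hlow` is needed only here: `log 0 = 0`, and an unbounded-below `limsup` in `ℝ` is junk.
  have hcob : IsCoboundedUnder (· ≤ ·) atTop (fun x => log (f x) / log x) := by
    refine isCoboundedUnder_le_of_eventually_le atTop (x := p - 1) ?_
    filter_upwards [hbounds, (hlim c p).eventually (eventually_ge_nhds (sub_one_lt p))]
      with x hx hpx
    exact hpx.trans hx.1
  calc limsup (fun x => log (f x) / log x) atTop
      ≤ limsup (fun x => log C / log x + q) atTop :=
        limsup_le_limsup (hbounds.mono fun _ hx => hx.2) hcob (hlim C q).isBoundedUnder_le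
    _ = q := (hlim C q).limsup_eq

section RelaySelection

variable {Ω ι : Type*} [MeasureSpace Ω] [IsProbabilityMeasure (ℙ : Measure Ω)] [Fintype ι]
  {a b : ι → ℝ} {G H : ι → Ω → ℝ} {K : Ω → ι}

lemma ae_forall_pos_of_isUnitExp (hGmeas : ∀ k, Measurable (G k))
    (hHmeas : ∀ k, Measurable (H k)) (hGexp : ∀ k, IsUnitExp (G k))
    (hHexp : ∀ k, IsUnitExp (H k)) : ∀ᵐ ω, ∀ k, 0 < G k ω ∧ 0 < H k ω :=
  ae_all_iff.2 fun k => ((hGexp k).ae_pos (hGmeas k)).and ((hHexp k).ae_pos (hHmeas k))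

lemma measure_min_selected_lt_le (ha : ∀ k, 0 < a k) (hb : ∀ k, 0 < b k)
    (hGmeas : ∀ k, Measurable (G k)) (hHmeas : ∀ k, Measurable (H k))
    (hindep : iIndepFun (Sum.elim G H) ℙ)
    (hGexp : ∀ k, IsUnitExp (G k)) (hHexp : ∀ k, IsUnitExp (H k))
    (hK : ∀ ω k, (1 / (a k * G k ω) + 1 / (b k * H k ω))⁻¹
      ≤ (1 / (a (K ω) * G (K ω) ω) + 1 / (b (K ω) * H (K ω) ω))⁻¹)
    {s : ℝ} (hs : 0 ≤ s) :
    ℙ {ω | min (a (K ω) * G (K ω) ω) (b (K ω) * H (K ω) ω) < s}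
      ≤ ENNReal.ofReal ((2 * s) ^ Fintype.card ι * ∏ k, (1 / a k + 1 / b k)) := by
  have hsub : {ω | min (a (K ω) * G (K ω) ω) (b (K ω) * H (K ω) ω) < s}
      ≤ᵐ[ℙ] ⋂ k, (G k ⁻¹' Set.Iic (2 * s / a k) ∪ H k ⁻¹' Set.Iic (2 * s / b k)) := by
    filter_upwards [ae_forall_pos_of_isUnitExp hGmeas hHmeas hGexp hHexp] with ω hpos hω
    refine Set.mem_iInter.2 fun k => ?_
    simp only [Set.mem_union, Set.mem_preimage, Set.mem_Iic]
    have hmin : min (a k * G k ω) (b k * H k ω) < 2 * s :=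
      (min_le_two_mul_min_of_harmonic_le (mul_pos (ha _) (hpos _).1) (mul_pos (hb _) (hpos _).2)
        (mul_pos (ha _) (hpos _).1) (mul_pos (hb _) (hpos _).2) (hK ω k)).trans_lt
        (by linarith [show min _ _ < s from hω])
    rw [le_div_iff₀ (ha k), le_div_iff₀ (hb k)]
    rcases min_lt_iff.1 hmin with h | h
    · exact Or.inl (by linarith)
    · exact Or.inr (by linarith)
  calc ℙ {ω | min (a (K ω) * G (K ω) ω) (b (K ω) * H (K ω) ω) < s}
      ≤ ∏ k, (ℙ (G k ⁻¹' Set.Iic (2 * s / a k)) + ℙ (H k ⁻¹' Set.Iic (2 * s / b k))) :=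
        (measure_mono_ae hsub).trans <| hindep.measure_iInter_preimage_union_le
          (fun _ => measurableSet_Iic) (fun _ => measurableSet_Iic)
    _ ≤ ∏ k, ENNReal.ofReal (2 * s * (1 / a k + 1 / b k)) := by
        refine Finset.prod_le_prod' fun k _ => ?_
        have hak := ha k
        have hbk := hb k
        rw [mul_add, mul_one_div, mul_one_div, ENNReal.ofReal_add (by positivity) (by positivity)]
        exact add_le_add ((hGexp k).measure_preimage_Iic_le (hGmeas k) (by positivity))
          ((hHexp k).measure_preimage_Iic_le (hHmeas k) (by positivity))
    _ = ENNReal.ofReal ((2 * s) ^ Fintype.card ι * ∏ k, (1 / a k + 1 / b k)) := by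
        rw [← ENNReal.ofReal_prod_of_nonneg fun k _ => by have := ha k; have := hb k; positivity,
          Finset.prod_mul_distrib, Finset.prod_const, Finset.card_univ]

lemma ofReal_le_measure_min_selected_lt (ha : ∀ k, 0 < a k) (hGmeas : ∀ k, Measurable (G k))
    (hindep : iIndepFun G ℙ) (hGexp : ∀ k, IsUnitExp (G k)) {s : ℝ} (hs0 : 0 < s)
    (hs1 : s ≤ 1) :
    ENNReal.ofReal (s ^ Fintype.card ι * ∏ k, 1 / (2 * a k + 1))
      ≤ ℙ {ω | min (a (K ω) * G (K ω) ω) (b (K ω) * H (K ω) ω) < s} := by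
  have hsub : ⋂ k, G k ⁻¹' Set.Iic (s / (2 * a k))
      ⊆ {ω | min (a (K ω) * G (K ω) ω) (b (K ω) * H (K ω) ω) < s} := by
    intro ω hω
    have hGK : G (K ω) ω * (2 * a (K ω)) ≤ s :=
      (le_div_iff₀ (by linarith [ha (K ω)])).1 (Set.mem_iInter.1 hω (K ω))
    show min _ _ < s
    exact (min_le_left _ _).trans_lt (by linarith)
  calc ENNReal.ofReal (s ^ Fintype.card ι * ∏ k, 1 / (2 * a k + 1))
      = ∏ k, ENNReal.ofReal (s / (2 * a k + 1)) := by
        rw [← ENNReal.ofReal_prod_of_nonneg fun k _ => by have := ha k; positivity]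
        simp only [div_eq_mul_one_div s, Finset.prod_mul_distrib, Finset.prod_const,
          Finset.card_univ]
    _ ≤ ∏ k, ℙ (G k ⁻¹' Set.Iic (s / (2 * a k))) := by
        refine Finset.prod_le_prod' fun k _ => ?_
        have hak := ha k
        refine le_trans (ENNReal.ofReal_le_ofReal ?_)
          ((hGexp k).ofReal_div_one_add_le_measure_preimage_Iic (hGmeas k) (by positivity))
        rw [show s / (2 * a k) / (1 + s / (2 * a k)) = s / (2 * a k + s) by field_simp]
        exact div_le_div_of_nonneg_left hs0.le (by positivity) (by linarith)
    _ = ℙ (⋂ k, G k ⁻¹' Set.Iic (s / (2 * a k))) :=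
        (hindep.meas_iInter fun k => ⟨_, measurableSet_Iic, rfl⟩).symm
    _ ≤ _ := measure_mono hsub

lemma measure_tdmh_outage_eq (ha : ∀ k, 0 < a k) (hb : ∀ k, 0 < b k)
    (hGmeas : ∀ k, Measurable (G k)) (hHmeas : ∀ k, Measurable (H k))
    (hGexp : ∀ k, IsUnitExp (G k)) (hHexp : ∀ k, IsUnitExp (H k))
    {τf τb μ m γ : ℝ} (hτf : 0 < τf) (hτb : 0 < τb) (hμ : 0 < μ) (hm : 0 ≤ m) (hγ : 1 < γ) :
    ℙ {ω | τf / 2 * min (log (1 + γ * (a (K ω) * G (K ω) ω)))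
          (log (1 + γ * (b (K ω) * H (K ω) ω))) < m / (1 + μ) * log γ ∨
        τb / 2 * min (log (1 + γ * (a (K ω) * G (K ω) ω)))
          (log (1 + γ * (b (K ω) * H (K ω) ω))) < m / (1 + 1 / μ) * log γ}
      = ℙ {ω | min (a (K ω) * G (K ω) ω) (b (K ω) * H (K ω) ω)
          < (γ ^ (2 * m / min ((1 + μ) * τf) ((1 + 1 / μ) * τb)) - 1) / γ} := by
  refine measure_congr (eventuallyEq_set.2 ?_)
  filter_upwards [ae_forall_pos_of_isUnitExp hGmeas hHmeas hGexp hHexp] with ω hpos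
  rw [tdmh_outage_iff hτf hτb hμ (mul_nonneg hm (log_pos hγ).le),
    min_log_one_add_mul_lt_iff (by linarith) (mul_pos (ha _) (hpos _).1).le
      (mul_pos (hb _) (hpos _).2).le]

lemma toReal_measure_min_selected_lt_le_rpow (ha : ∀ k, 0 < a k) (hb : ∀ k, 0 < b k)
    (hGmeas : ∀ k, Measurable (G k)) (hHmeas : ∀ k, Measurable (H k))
    (hindep : iIndepFun (Sum.elim G H) ℙ)
    (hGexp : ∀ k, IsUnitExp (G k)) (hHexp : ∀ k, IsUnitExp (H k))
    (hK : ∀ ω k, (1 / (a k * G k ω) + 1 / (b k * H k ω))⁻¹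
      ≤ (1 / (a (K ω) * G (K ω) ω) + 1 / (b (K ω) * H (K ω) ω))⁻¹)
    {r γ : ℝ} (hr : 0 ≤ r) (hγ : 1 < γ) :
    (ℙ {ω | min (a (K ω) * G (K ω) ω) (b (K ω) * H (K ω) ω) < (γ ^ r - 1) / γ}).toReal
      ≤ 2 ^ Fintype.card ι * (∏ k, (1 / a k + 1 / b k)) * γ ^ ((r - 1) * Fintype.card ι) := by
  have hs_nonneg : 0 ≤ (γ ^ r - 1) / γ :=
    div_nonneg (by linarith [one_le_rpow hγ.le hr]) (by linarith)
  have hs_le : (γ ^ r - 1) / γ ≤ γ ^ (r - 1) := by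
    rw [rpow_sub_one (by linarith)]
    gcongr
    linarith
  have hC : 0 < ∏ k, (1 / a k + 1 / b k) :=
    Finset.prod_pos fun k _ => by have := ha k; have := hb k; positivity
  refine ENNReal.toReal_le_of_le_ofReal (by positivity) ((measure_min_selected_lt_le ha hb
    hGmeas hHmeas hindep hGexp hHexp hK hs_nonneg).trans (ENNReal.ofReal_le_ofReal ?_))
  rw [rpow_mul (by linarith), rpow_natCast, mul_right_comm, ← mul_pow]
  gcongr

lemma rpow_neg_le_toReal_measure_min_selected_lt (ha : ∀ k, 0 < a k)
    (hGmeas : ∀ k, Measurable (G k)) (hindep : iIndepFun G ℙ) (hGexp : ∀ k, IsUnitExp (G k))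
    {r γ : ℝ} (hr : r ≤ 1) (hγ : 1 < γ) (hγr : 2 ≤ γ ^ r) :
    (∏ k, 1 / (2 * a k + 1)) * γ ^ (-(Fintype.card ι : ℝ))
      ≤ (ℙ {ω | min (a (K ω) * G (K ω) ω) (b (K ω) * H (K ω) ω) < (γ ^ r - 1) / γ}).toReal := by
  have hs_ge : 1 / γ ≤ (γ ^ r - 1) / γ := by gcongr; linarith
  have hs_le : (γ ^ r - 1) / γ ≤ 1 := by
    have hle : γ ^ r ≤ γ ^ (1 : ℝ) := rpow_le_rpow_of_exponent_le hγ.le hr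
    rw [rpow_one] at hle
    rw [div_le_one (by linarith)]
    linarith
  have hc : 0 ≤ ∏ k, 1 / (2 * a k + 1) := Finset.prod_nonneg fun k _ => by have := ha k; positivity
  refine (ENNReal.ofReal_le_iff_le_toReal (measure_ne_top _ _)).1
    ((ENNReal.ofReal_le_ofReal ?_).trans (ofReal_le_measure_min_selected_lt ha hGmeas hindep
      hGexp ((one_div_pos.2 (by linarith)).trans_le hs_ge) hs_le))
  rw [mul_comm, rpow_neg (by linarith), rpow_natCast, ← inv_pow, ← one_div]
  gcongr

end RelaySelection

theorem tdmh_optimal_relay_dmt_general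
    {Ω : Type*} [MeasureSpace Ω] [IsProbabilityMeasure (ℙ : Measure Ω)]
    (n : ℕ) (a b : Fin n → ℝ) (G H : Fin n → Ω → ℝ)
    (ha : ∀ k, 0 < a k) (hb : ∀ k, 0 < b k)
    (hGmeas : ∀ k, Measurable (G k)) (hHmeas : ∀ k, Measurable (H k))
    (hindep : iIndepFun (Sum.elim G H) ℙ)
    (hGexp : ∀ k, IsUnitExp (G k)) (hHexp : ∀ k, IsUnitExp (H k))
    (K : Ω → Fin n)
    (hK : ∀ ω k, (1 / (a k * G k ω) + 1 / (b k * H k ω))⁻¹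
            ≤ (1 / (a (K ω) * G (K ω) ω) + 1 / (b (K ω) * H (K ω) ω))⁻¹)
    (τf τb μ m : ℝ)
    (hτf : 0 < τf ∧ τf < 1) (hτb : 0 < τb ∧ τb < 1)
    (hμ : 0 < μ)
    (hm : 0 < m) (hm' : m < (1/2) * min ((1 + μ) * τf) ((1 + 1/μ) * τb)) :
    limsup (fun γ : ℝ =>
        Real.log (ℙ {ω |
            (τf / 2) * min (Real.log (1 + γ * (a (K ω) * G (K ω) ω)))
                           (Real.log (1 + γ * (b (K ω) * H (K ω) ω)))
              < (m / (1 + μ)) * Real.log γ ∨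
            (τb / 2) * min (Real.log (1 + γ * (a (K ω) * G (K ω) ω)))
                           (Real.log (1 + γ * (b (K ω) * H (K ω) ω)))
              < (m / (1 + 1/μ)) * Real.log γ}).toReal / Real.log γ) atTop
      ≤ -((n : ℝ) * (1 - 2 * m / min ((1 + μ) * τf) ((1 + 1/μ) * τb))) := by
  set r := 2 * m / min ((1 + μ) * τf) ((1 + 1/μ) * τb)
  have hmin : 0 < min ((1 + μ) * τf) ((1 + 1/μ) * τb) :=
    lt_min (mul_pos (by linarith) hτf.1) (mul_pos (by positivity) hτb.1)
  have hr0 : 0 < r := by positivity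
  have hr1 : r < 1 := by rw [div_lt_one hmin]; linarith
  have hc : 0 < ∏ k, 1 / (2 * a k + 1) := Finset.prod_pos fun k _ => by have := ha k; positivity
  refine (limsup_log_div_log_le (C := 2 ^ Fintype.card (Fin n) * ∏ k, (1 / a k + 1 / b k))
    (p := -(Fintype.card (Fin n) : ℝ)) (q := (r - 1) * Fintype.card (Fin n)) hc ?_ ?_).trans_eq
    (by rw [Fintype.card_fin]; ring)
  · filter_upwards [eventually_gt_atTop 1, (tendsto_rpow_atTop hr0).eventually_ge_atTop 2]
      with γ hγ hγr
    rw [measure_tdmh_outage_eq ha hb hGmeas hHmeas hGexp hHexp hτf.1 hτb.1 hμ hm.le hγ]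
    exact rpow_neg_le_toReal_measure_min_selected_lt ha hGmeas
      (iIndepFun.precomp (f := Sum.elim G H) Sum.inl_injective hindep) hGexp hr1.le hγ hγr
  · filter_upwards [eventually_gt_atTop 1] with γ hγ
    rw [measure_tdmh_outage_eq ha hb hGmeas hHmeas hGexp hHexp hτf.1 hτb.1 hμ hm.le hγ]
    exact toReal_measure_min_selected_lt_le_rpow ha hb hGmeas hHmeas hindep hGexp hHexp hK
      hr0.le hγ

/-- diversity-multiplexing tradeoff of TDMH without relay collaboration:
routing through the single relay `K*` maximizing the harmonic end-to-end metric
`(1/(a_k G_k) + 1/(b_k H_k))⁻¹` achieves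
`limsup_{γ→∞} log ε(γ)/log γ ≤ −n(1 − 2m/min{(1+μ)τ_f, (1+1/μ)τ_b})`,
the same DMT as with full relay collaboration. -/
theorem tdmh_optimal_relay_dmt
    {Ω : Type*} [MeasureSpace Ω] [IsProbabilityMeasure (ℙ : Measure Ω)]
    (n : ℕ) (hn : 1 ≤ n) (a b : Fin n → ℝ) (G H : Fin n → Ω → ℝ)
    (ha : ∀ k, 0 < a k) (hb : ∀ k, 0 < b k)
    (hGmeas : ∀ k, Measurable (G k)) (hHmeas : ∀ k, Measurable (H k))
    (hindep : iIndepFun (Sum.elim G H) ℙ)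
    (hGexp : ∀ k, IsUnitExp (G k)) (hHexp : ∀ k, IsUnitExp (H k))
    (K : Ω → Fin n) (hKmeas : Measurable K)
    (hK : ∀ ω k, (1 / (a k * G k ω) + 1 / (b k * H k ω))⁻¹
            ≤ (1 / (a (K ω) * G (K ω) ω) + 1 / (b (K ω) * H (K ω) ω))⁻¹)
    (τf τb μ m : ℝ)
    (hτf : 0 < τf ∧ τf < 1) (hτb : 0 < τb ∧ τb < 1) (hτ : τf + τb = 1)
    (hμ : 0 < μ)
    (hm : 0 < m) (hm' : m < (1/2) * min ((1 + μ) * τf) ((1 + 1/μ) * τb)) :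
    limsup (fun γ : ℝ =>
        Real.log (ℙ {ω |
            (τf / 2) * min (Real.log (1 + γ * (a (K ω) * G (K ω) ω)))
                           (Real.log (1 + γ * (b (K ω) * H (K ω) ω)))
              < (m / (1 + μ)) * Real.log γ ∨
            (τb / 2) * min (Real.log (1 + γ * (a (K ω) * G (K ω) ω)))
                           (Real.log (1 + γ * (b (K ω) * H (K ω) ω)))
              < (m / (1 + 1/μ)) * Real.log γ}).toReal / Real.log γ) atTop
      ≤ -((n : ℝ) * (1 - 2 * m / min ((1 + μ) * τf) ((1 + 1/μ) * τb))) :=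
  tdmh_optimal_relay_dmt_general n a b G H ha hb hGmeas hHmeas hindep hGexp hHexp K hK τf τb μ m hτf
    hτb hμ hm hm'
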